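/- Let G be a simple graph on a finite vertex type V with |V| ≥ 4, let u ≠ v be adjacent vertices of G, and suppose G has a Hamiltonian cycle that traverses the edge {u,v}. Define the contraction G/e as the simple graph on the subtype {x : V // x ≠ v} in which a and b are adjacent if and only if a ≠ b and (a and b are adjacent in G, or a = u and v is adjacent to b in G, or b = u and v is adjacent to a in G). Then G/e has a Hamiltonian cycle. -/

import Mathlib

/-!
Rotating and possibly reversing the Hamiltonian cycle, it starts at `u` and leaves along `uv`;
removing that edge leaves a Hamiltonian path `v w ⋯ u` of `G`. The part `w ⋯ u` avoids `v`, so it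
is a path of `G - v ≤ G/e`, and the edge `vw` becomes `uw` in `G/e`, closing it into a cycle through
all `|V| - 1` vertices; `|V| ≥ 4` makes that cycle have length at least `3`.
-/

open SimpleGraph Walk

namespace SimpleGraph

variable {V : Type*} {G : SimpleGraph V}

namespace Walk

lemma IsPath.induce {s : Set V} {x y : V} {p : G.Walk x y} (hp : p.IsPath)
    (hs : ∀ z ∈ p.support, z ∈ s) : (p.induce s hs).IsPath :=
  (isPath_map_iff_of_injective (Embedding.induce (G := G) s).injective).1 (by rwa [map_induce])

lemma length_induce {s : Set V} {x y : V} (p : G.Walk x y) (hs : ∀ z ∈ p.support, z ∈ s) :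
    (p.induce s hs).length = p.length := by
  induction p with
  | nil => rfl
  | cons _ p ih => simp [ih]

lemma IsCycle.snd_eq_or_penultimate_eq_of_mem_edges {u v : V} {c : G.Walk u u} (hc : c.IsCycle)
    (he : s(u, v) ∈ c.edges) : c.snd = v ∨ c.penultimate = v := by
  cases c with
  | nil => exact absurd hc not_isCycle_nil
  | cons h p =>
    rw [edges_cons, List.mem_cons] at he
    rcases he with he | he
    · exact Or.inl (by rw [snd_cons, Sym2.congr_right.1 he])
    · have hp : p.IsPath := ((cons_isCycle_iff p h).1 hc).1
      have hnil : ¬ p.Nil := edges_eq_nil.not.1 (List.ne_nil_of_mem he)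
      rw [penultimate_cons_of_not_nil h p hnil]
      exact Or.inr (hp.eq_penultimate_of_mem_edges he).symm

variable [DecidableEq V]

lemma IsHamiltonianCycle.reverse {u : V} {c : G.Walk u u} (hc : c.IsHamiltonianCycle) :
    c.reverse.IsHamiltonianCycle := by
  have := hc.finite
  cases nonempty_fintype V
  rw [isHamiltonianCycle_iff_isCycle_and_length_eq] at hc ⊢
  exact ⟨hc.1.reverse, by rw [length_reverse, hc.2]⟩

lemma IsHamiltonianCycle.exists_isHamiltonian_of_mem_edges {a u v : V} {c : G.Walk a a}
    (hc : c.IsHamiltonianCycle) (he : s(u, v) ∈ c.edges) :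
    ∃ p : G.Walk v u, p.IsHamiltonian := by
  have hu := hc.mem_support u
  obtain ⟨d, hd, rfl⟩ : ∃ d : G.Walk u u, d.IsHamiltonianCycle ∧ d.snd = v := by
    have hd := hc.rotate hu
    rcases hd.isCycle.snd_eq_or_penultimate_eq_of_mem_edges
      ((c.rotate_edges u hu).perm.mem_iff.2 he) with h | h
    · exact ⟨_, hd, h⟩
    · exact ⟨_, hd.reverse, by rw [snd_reverse, h]⟩
  exact ⟨d.tail, hd.isHamiltonian_tail⟩

end Walk

def IsContraction (G : SimpleGraph V) (u v : V) (G' : SimpleGraph {x : V // x ≠ v}) : Prop :=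
  ∀ a b : {x : V // x ≠ v}, G'.Adj a b ↔ a ≠ b ∧
    (G.Adj a.1 b.1 ∨ (a.1 = u ∧ G.Adj v b.1) ∨ (b.1 = u ∧ G.Adj v a.1))

namespace IsContraction

variable {u v : V} {G' : SimpleGraph {x : V // x ≠ v}}

lemma induce_le (hG' : G.IsContraction u v G') : G.induce {x | x ≠ v} ≤ G' :=
  fun a b hab => (hG' a b).2 ⟨hab.ne, Or.inl hab⟩

lemma adj_of_adj_right {w : V} (hG' : G.IsContraction u v G') (hu : u ≠ v) (hw : w ≠ v)
    (hwu : w ≠ u) (hvw : G.Adj v w) : G'.Adj ⟨u, hu⟩ ⟨w, hw⟩ :=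
  (hG' _ _).2 ⟨fun h => hwu (congrArg Subtype.val h).symm, Or.inr (Or.inl ⟨rfl, hvw⟩)⟩

lemma exists_isCycle (hG' : G.IsContraction u v G') {w : V} {r : G.Walk w u} (hr : r.IsPath)
    (hv : v ∉ r.support) (hvw : G.Adj v w) (hlen : 2 ≤ r.length) :
    ∃ (a : {x : V // x ≠ v}) (c : G'.Walk a a), c.IsCycle ∧ c.length = r.length + 1 := by
  have hs : ∀ x ∈ r.support, x ∈ {x | x ≠ v} := fun x hx hxv => hv (hxv ▸ hx)
  have hwu : w ≠ u := by
    rintro rfl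
    rw [isPath_iff_nil] at hr
    simp [hr.eq_nil] at hlen
  let r' := (r.induce _ hs).mapLe hG'.induce_le
  have hr' : r'.IsPath := (hr.induce hs).mapLe _
  have hlen' : r'.length = r.length := by rw [length_mapLe, length_induce]
  refine ⟨_, cons (hG'.adj_of_adj_right _ _ hwu hvw) r', ?_, by rw [length_cons, hlen']⟩
  rw [isCycle_iff_isPath_tail_and_le_length]
  simp only [getVert_cons_succ, tail_cons, isPath_copy, length_cons]
  exact ⟨hr', by omega⟩

end IsContraction

end SimpleGraph

theorem hamiltonicity_contraction_general {V : Type*} [Fintype V] [DecidableEq V]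
    (G : SimpleGraph V) (hV : 4 ≤ Fintype.card V)
    (u v : V)
    (a : V) (c : G.Walk a a) (hc : c.IsHamiltonianCycle)
    (he : s(u, v) ∈ c.edges)
    (G' : SimpleGraph {x : V // x ≠ v})
    (hG' : ∀ a b : {x : V // x ≠ v},
      G'.Adj a b ↔ a ≠ b ∧
        (G.Adj a.1 b.1 ∨ (a.1 = u ∧ G.Adj v b.1) ∨ (b.1 = u ∧ G.Adj v a.1))) :
    ∃ (a' : {x : V // x ≠ v}) (c' : G'.Walk a' a'), c'.IsHamiltonianCycle := by
  obtain ⟨p, hp⟩ := hc.exists_isHamiltonian_of_mem_edges he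
  have hplen := hp.length_eq
  cases p with
  | nil => rw [length_nil] at hplen; omega
  | cons hvw r =>
    obtain ⟨hr, hvr⟩ := (cons_isPath_iff hvw r).1 hp.isPath
    rw [length_cons] at hplen
    obtain ⟨a', c', hc', hlen⟩ := IsContraction.exists_isCycle hG' hr hvr hvw (by omega)
    refine ⟨a', c', isHamiltonianCycle_iff_isCycle_and_length_eq.2 ⟨hc', ?_⟩⟩
    rw [hlen, Fintype.card_subtype_compl, Fintype.card_subtype_eq]
    omega

theorem hamiltonicity_contraction {V : Type*} [Fintype V] [DecidableEq V]
    (G : SimpleGraph V) (hV : 4 ≤ Fintype.card V)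
    (u v : V) (huv : u ≠ v) (hadj : G.Adj u v)
    (a : V) (c : G.Walk a a) (hc : c.IsHamiltonianCycle)
    (he : s(u, v) ∈ c.edges)
    (G' : SimpleGraph {x : V // x ≠ v})
    (hG' : ∀ a b : {x : V // x ≠ v},
      G'.Adj a b ↔ a ≠ b ∧
        (G.Adj a.1 b.1 ∨ (a.1 = u ∧ G.Adj v b.1) ∨ (b.1 = u ∧ G.Adj v a.1))) :
    ∃ (a' : {x : V // x ≠ v}) (c' : G'.Walk a' a'), c'.IsHamiltonianCycle :=
  hamiltonicity_contraction_general G hV u v a c hc he G' hG'
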